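/- (A Blackwell-inferior channel is less capable.) Let S, X₁, X₂ be finite sets and let κ₁, κ₂ be channels from S to X₁ and from S to X₂. If κ₁ is a garbling of κ₂ (κ₁ ⪯ κ₂), then for every probability distribution p on S the mutual informations satisfy I(p,κ₁) ≤ I(p,κ₂). -/

import Mathlib

open Finset

/-- A probability distribution on a finite set. -/
def IsDist {S : Type} [Fintype S] (p : S → ℝ) : Prop :=
  (∀ s, 0 ≤ p s) ∧ ∑ s, p s = 1

/-- A channel from `S` to `X`: a column-stochastic matrix. -/
def IsChannel {S X : Type} [Fintype S] [Fintype X] (κ : X → S → ℝ) : Prop :=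
  (∀ x s, 0 ≤ κ x s) ∧ ∀ s, ∑ x, κ x s = 1

/-- `κ₁` is a garbling of `κ₂` (the Blackwell order `κ₁ ⪯ κ₂`). -/
def IsGarbling {S X₁ X₂ : Type} [Fintype S] [Fintype X₁] [Fintype X₂]
    (κ₁ : X₁ → S → ℝ) (κ₂ : X₂ → S → ℝ) : Prop :=
  ∃ lam : X₁ → X₂ → ℝ, IsChannel lam ∧ ∀ x₁ s, κ₁ x₁ s = ∑ x₂, lam x₁ x₂ * κ₂ x₂ s

/-- Optimal expected utility: maximum over decision rules `d : X → A`. -/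
noncomputable def optUtility {S X A : Type} [Fintype S] [Fintype X] [Fintype A]
    (p : S → ℝ) (u : A × S → ℝ) (κ : X → S → ℝ) : ℝ :=
  ⨆ d : X → A, ∑ s, ∑ x, p s * κ x s * u (d x, s)

/-- Mutual information between input (with distribution `p`) and output of channel `κ`;
terms with `κ x s = 0` are taken to be `0`. -/
noncomputable def mutualInfo {S X : Type} [Fintype S] [Fintype X]
    (p : S → ℝ) (κ : X → S → ℝ) : ℝ :=
  ∑ s, ∑ x, if κ x s = 0 then 0 else
    p s * κ x s * Real.log (κ x s / ∑ s', p s' * κ x s')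

/-- Channel composition: `(κ·λ) x s = ∑ t, κ x t * λ t s`. -/
def chanComp {S T X : Type} [Fintype S] [Fintype T] [Fintype X]
    (κ : X → T → ℝ) (lam : T → S → ℝ) : X → S → ℝ :=
  fun x s => ∑ t, κ x t * lam t s

/-- Marginal on `S` of a joint distribution on `S × X₁ × X₂`. -/
noncomputable def margS3 {S X₁ X₂ : Type} [Fintype S] [Fintype X₁] [Fintype X₂]
    (P : S × X₁ × X₂ → ℝ) (s : S) : ℝ := ∑ x₁, ∑ x₂, P (s, x₁, x₂)

/-- The channel `X₁ ← S` of conditional probabilities `P(X₁ = x₁ | S = s)`. -/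
noncomputable def chan1of3 {S X₁ X₂ : Type} [Fintype S] [Fintype X₁] [Fintype X₂]
    (P : S × X₁ × X₂ → ℝ) (x₁ : X₁) (s : S) : ℝ :=
  (∑ x₂, P (s, x₁, x₂)) / margS3 P s

/-- The channel `X₂ ← S` of conditional probabilities `P(X₂ = x₂ | S = s)`. -/
noncomputable def chan2of3 {S X₁ X₂ : Type} [Fintype S] [Fintype X₁] [Fintype X₂]
    (P : S × X₁ × X₂ → ℝ) (x₂ : X₂) (s : S) : ℝ :=
  (∑ x₁, P (s, x₁, x₂)) / margS3 P s

/-- Pushforward of a joint distribution on `S × X₁ × X₂` along `f : S → S'`. -/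
noncomputable def push3 {S S' X₁ X₂ : Type} [Fintype S] [Fintype X₁] [Fintype X₂]
    [DecidableEq S'] (f : S → S') (P : S × X₁ × X₂ → ℝ) : S' × X₁ × X₂ → ℝ :=
  fun q => ∑ s ∈ Finset.univ.filter (fun s => f s = q.1), P (s, q.2.1, q.2.2)

lemma one_sub_inv_le_log_aux {r : ℝ} (hr : 0 < r) : 1 - r⁻¹ ≤ Real.log r := by
  have h := Real.log_le_sub_one_of_pos (inv_pos.mpr hr)
  rw [Real.log_inv] at h
  linarith

lemma pointwise_dpi_aux (a b k1 k2 Q1 Q2 : ℝ) (ha : 0 ≤ a) (hb : 0 ≤ b)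
    (hk1 : 0 ≤ k1) (hk2 : 0 ≤ k2)
    (hak : a * k2 ≤ k1) (hbk1 : b * k1 ≤ Q1) (hbk2 : b * k2 ≤ Q2) :
    (if k1 = 0 then 0 else a * (b * k2) * Real.log (k1 / Q1))
      + (a * (b * k2) - (if Q1 = 0 then 0 else a * (b * k1) * Q2 / Q1))
    ≤ (if k2 = 0 then 0 else a * (b * k2) * Real.log (k2 / Q2)) := by
  by_cases hw : a * (b * k2) = 0
  · have hT1 : (if k1 = 0 then 0 else a * (b * k2) * Real.log (k1 / Q1)) = 0 := by
      split <;> simp [hw]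
    have hT2 : (if k2 = 0 then 0 else a * (b * k2) * Real.log (k2 / Q2)) = 0 := by
      split <;> simp [hw]
    have hc : 0 ≤ (if Q1 = 0 then 0 else a * (b * k1) * Q2 / Q1) := by
      split
      · exact le_refl 0
      · next hQ1 =>
        have hQ1' : 0 < Q1 := lt_of_le_of_ne (le_trans (mul_nonneg hb hk1) hbk1) (Ne.symm hQ1)
        have hQ2' : 0 ≤ Q2 := le_trans (mul_nonneg hb hk2) hbk2
        positivity
    rw [hT1, hT2, hw]
    linarith
  · have ha' : 0 < a := lt_of_le_of_ne ha (by rintro rfl; simp at hw)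
    have hbk2' : b * k2 ≠ 0 := fun h => hw (by rw [h, mul_zero])
    have hb' : 0 < b := lt_of_le_of_ne hb (by rintro rfl; simp at hbk2')
    have hk2' : 0 < k2 := lt_of_le_of_ne hk2 (by rintro rfl; simp at hbk2')
    have hk1' : 0 < k1 := lt_of_lt_of_le (mul_pos ha' hk2') hak
    have hQ1' : 0 < Q1 := lt_of_lt_of_le (mul_pos hb' hk1') hbk1
    have hQ2' : 0 < Q2 := lt_of_lt_of_le (mul_pos hb' hk2') hbk2
    rw [if_neg (ne_of_gt hk1'), if_neg (ne_of_gt hk2'), if_neg (ne_of_gt hQ1')]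
    set w : ℝ := a * (b * k2) with hwdef
    have hw' : 0 < w := mul_pos ha' (mul_pos hb' hk2')
    have hr : 0 < (k2 / Q2) / (k1 / Q1) := by positivity
    have hlog := one_sub_inv_le_log_aux hr
    rw [Real.log_div (ne_of_gt (div_pos hk2' hQ2')) (ne_of_gt (div_pos hk1' hQ1'))] at hlog
    have hmul := mul_le_mul_of_nonneg_left hlog (le_of_lt hw')
    have hinv : w * ((k2 / Q2) / (k1 / Q1))⁻¹ = a * (b * k1) * Q2 / Q1 := by
      rw [hwdef]
      field_simp
    have hexp : w * (1 - ((k2 / Q2) / (k1 / Q1))⁻¹)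
        = w - a * (b * k1) * Q2 / Q1 := by rw [mul_sub, hinv, mul_one]
    rw [hexp] at hmul
    rw [mul_sub] at hmul
    linarith

lemma dpi_aux {S X₁ X₂ : Type} [Fintype S] [Fintype X₁] [Fintype X₂]
    (κ₁ : X₁ → S → ℝ) (κ₂ : X₂ → S → ℝ) (lam : X₁ → X₂ → ℝ) (p : S → ℝ)
    (h10 : ∀ x s, 0 ≤ κ₁ x s) (h11 : ∀ s, ∑ x, κ₁ x s = 1)
    (h20 : ∀ x s, 0 ≤ κ₂ x s) (h21 : ∀ s, ∑ x, κ₂ x s = 1)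
    (hl0 : ∀ x₁ x₂, 0 ≤ lam x₁ x₂) (hl1 : ∀ x₂, ∑ x₁, lam x₁ x₂ = 1)
    (hlk : ∀ x₁ s, κ₁ x₁ s = ∑ x₂, lam x₁ x₂ * κ₂ x₂ s)
    (hp0 : ∀ s, 0 ≤ p s) (hp1 : ∑ s, p s = 1) :
    mutualInfo p κ₁ ≤ mutualInfo p κ₂ := by
  have hq₁lam : ∀ x₁, (∑ s', p s' * κ₁ x₁ s')
      = ∑ x₂, lam x₁ x₂ * (∑ s', p s' * κ₂ x₂ s') := by
    intro x₁
    calc (∑ s', p s' * κ₁ x₁ s')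
        = ∑ s', ∑ x₂, lam x₁ x₂ * (p s' * κ₂ x₂ s') := by
          refine Finset.sum_congr rfl fun s _ => ?_
          rw [hlk, Finset.mul_sum]
          exact Finset.sum_congr rfl fun x₂ _ => by ring
      _ = ∑ x₂, ∑ s', lam x₁ x₂ * (p s' * κ₂ x₂ s') := Finset.sum_comm
      _ = ∑ x₂, lam x₁ x₂ * (∑ s', p s' * κ₂ x₂ s') := by
          refine Finset.sum_congr rfl fun x₂ _ => ?_
          rw [Finset.mul_sum]
  -- pointwise key inequality
  have key : ∀ s x₁ x₂,
      (if κ₁ x₁ s = 0 then 0 else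
          lam x₁ x₂ * (p s * κ₂ x₂ s) * Real.log (κ₁ x₁ s / ∑ s', p s' * κ₁ x₁ s'))
        + (lam x₁ x₂ * (p s * κ₂ x₂ s)
          - (if (∑ s', p s' * κ₁ x₁ s') = 0 then 0 else
              lam x₁ x₂ * (p s * κ₁ x₁ s) * (∑ s', p s' * κ₂ x₂ s')
                / (∑ s', p s' * κ₁ x₁ s')))
      ≤ (if κ₂ x₂ s = 0 then 0 else
          lam x₁ x₂ * (p s * κ₂ x₂ s) * Real.log (κ₂ x₂ s / ∑ s', p s' * κ₂ x₂ s')) := by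
    intro s x₁ x₂
    refine pointwise_dpi_aux (lam x₁ x₂) (p s) (κ₁ x₁ s) (κ₂ x₂ s) _ _
      (hl0 x₁ x₂) (hp0 s) (h10 x₁ s) (h20 x₂ s) ?_ ?_ ?_
    · rw [hlk]
      exact Finset.single_le_sum (fun x _ => mul_nonneg (hl0 x₁ x) (h20 x s))
        (Finset.mem_univ x₂)
    · exact Finset.single_le_sum (fun s' _ => mul_nonneg (hp0 s') (h10 x₁ s'))
        (Finset.mem_univ s)
    · exact Finset.single_le_sum (fun s' _ => mul_nonneg (hp0 s') (h20 x₂ s'))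
        (Finset.mem_univ s)
  have main : (∑ s, ∑ x₁, ∑ x₂,
      ((if κ₁ x₁ s = 0 then 0 else
          lam x₁ x₂ * (p s * κ₂ x₂ s) * Real.log (κ₁ x₁ s / ∑ s', p s' * κ₁ x₁ s'))
        + (lam x₁ x₂ * (p s * κ₂ x₂ s)
          - (if (∑ s', p s' * κ₁ x₁ s') = 0 then 0 else
              lam x₁ x₂ * (p s * κ₁ x₁ s) * (∑ s', p s' * κ₂ x₂ s')
                / (∑ s', p s' * κ₁ x₁ s')))))
      ≤ ∑ s, ∑ x₁, ∑ x₂,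
        (if κ₂ x₂ s = 0 then 0 else
          lam x₁ x₂ * (p s * κ₂ x₂ s) * Real.log (κ₂ x₂ s / ∑ s', p s' * κ₂ x₂ s')) := by
    refine Finset.sum_le_sum fun s _ => Finset.sum_le_sum fun x₁ _ =>
      Finset.sum_le_sum fun x₂ _ => key s x₁ x₂
  -- identify the three pieces
  have hA : (∑ s, ∑ x₁, ∑ x₂,
      (if κ₁ x₁ s = 0 then 0 else
        lam x₁ x₂ * (p s * κ₂ x₂ s) * Real.log (κ₁ x₁ s / ∑ s', p s' * κ₁ x₁ s')))
      = mutualInfo p κ₁ := by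
    unfold mutualInfo
    refine Finset.sum_congr rfl fun s _ => Finset.sum_congr rfl fun x₁ _ => ?_
    by_cases h : κ₁ x₁ s = 0
    · simp [h]
    · simp only [if_neg h]
      have hps : p s * κ₁ x₁ s = ∑ x₂, lam x₁ x₂ * (p s * κ₂ x₂ s) := by
        rw [hlk, Finset.mul_sum]
        exact Finset.sum_congr rfl fun x₂ _ => by ring
      rw [hps, Finset.sum_mul]
  have hB : (∑ s, ∑ x₁, ∑ x₂,
      (if κ₂ x₂ s = 0 then 0 else
        lam x₁ x₂ * (p s * κ₂ x₂ s) * Real.log (κ₂ x₂ s / ∑ s', p s' * κ₂ x₂ s')))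
      = mutualInfo p κ₂ := by
    unfold mutualInfo
    refine Finset.sum_congr rfl fun s _ => ?_
    rw [Finset.sum_comm]
    refine Finset.sum_congr rfl fun x₂ _ => ?_
    by_cases h : κ₂ x₂ s = 0
    · simp [h]
    · simp only [if_neg h, mul_assoc, ← Finset.sum_mul, hl1, one_mul]
  have hC : (∑ s, ∑ x₁, ∑ x₂, lam x₁ x₂ * (p s * κ₂ x₂ s)) = 1 := by
    have hs : ∀ s, (∑ x₁, ∑ x₂, lam x₁ x₂ * (p s * κ₂ x₂ s)) = p s := by
      intro s
      rw [Finset.sum_comm]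
      calc (∑ x₂, ∑ x₁, lam x₁ x₂ * (p s * κ₂ x₂ s))
          = ∑ x₂, (∑ x₁, lam x₁ x₂) * (p s * κ₂ x₂ s) := by
            refine Finset.sum_congr rfl fun x₂ _ => ?_
            rw [Finset.sum_mul]
        _ = ∑ x₂, p s * κ₂ x₂ s := by
            refine Finset.sum_congr rfl fun x₂ _ => ?_
            rw [hl1, one_mul]
        _ = p s * ∑ x₂, κ₂ x₂ s := by rw [Finset.mul_sum]
        _ = p s := by rw [h21, mul_one]
    calc (∑ s, ∑ x₁, ∑ x₂, lam x₁ x₂ * (p s * κ₂ x₂ s))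
        = ∑ s, p s := Finset.sum_congr rfl fun s _ => hs s
      _ = 1 := hp1
  have hD : (∑ s, ∑ x₁, ∑ x₂,
      (if (∑ s', p s' * κ₁ x₁ s') = 0 then 0 else
        lam x₁ x₂ * (p s * κ₁ x₁ s) * (∑ s', p s' * κ₂ x₂ s')
          / (∑ s', p s' * κ₁ x₁ s'))) = 1 := by
    rw [Finset.sum_comm]
    have hx : ∀ x₁, (∑ s, ∑ x₂,
        (if (∑ s', p s' * κ₁ x₁ s') = 0 then 0 else
          lam x₁ x₂ * (p s * κ₁ x₁ s) * (∑ s', p s' * κ₂ x₂ s')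
            / (∑ s', p s' * κ₁ x₁ s'))) = ∑ s, p s * κ₁ x₁ s := by
      intro x₁
      by_cases hq : (∑ s', p s' * κ₁ x₁ s') = 0
      · simp only [if_pos hq, Finset.sum_const_zero]
        exact hq.symm
      · simp only [if_neg hq]
        calc (∑ s, ∑ x₂, lam x₁ x₂ * (p s * κ₁ x₁ s) * (∑ s', p s' * κ₂ x₂ s')
                / (∑ s', p s' * κ₁ x₁ s'))
            = ∑ s, (p s * κ₁ x₁ s) *
                ((∑ x₂, lam x₁ x₂ * (∑ s', p s' * κ₂ x₂ s')) / (∑ s', p s' * κ₁ x₁ s')) := by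
              refine Finset.sum_congr rfl fun s _ => ?_
              rw [Finset.sum_div, Finset.mul_sum]
              refine Finset.sum_congr rfl fun x₂ _ => ?_
              ring
          _ = ∑ s, (p s * κ₁ x₁ s) * 1 := by
              refine Finset.sum_congr rfl fun s _ => ?_
              rw [← hq₁lam, div_self hq]
          _ = ∑ s, p s * κ₁ x₁ s := by simp
    calc (∑ x₁, ∑ s, ∑ x₂,
        (if (∑ s', p s' * κ₁ x₁ s') = 0 then 0 else
          lam x₁ x₂ * (p s * κ₁ x₁ s) * (∑ s', p s' * κ₂ x₂ s')
            / (∑ s', p s' * κ₁ x₁ s')))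
        = ∑ x₁, ∑ s, p s * κ₁ x₁ s := Finset.sum_congr rfl fun x₁ _ => hx x₁
      _ = ∑ s, ∑ x₁, p s * κ₁ x₁ s := Finset.sum_comm
      _ = ∑ s, p s := by
          refine Finset.sum_congr rfl fun s _ => ?_
          rw [← Finset.mul_sum, h11, mul_one]
      _ = 1 := hp1
  have hsplit : (∑ s, ∑ x₁, ∑ x₂,
      ((if κ₁ x₁ s = 0 then 0 else
          lam x₁ x₂ * (p s * κ₂ x₂ s) * Real.log (κ₁ x₁ s / ∑ s', p s' * κ₁ x₁ s'))
        + (lam x₁ x₂ * (p s * κ₂ x₂ s)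
          - (if (∑ s', p s' * κ₁ x₁ s') = 0 then 0 else
              lam x₁ x₂ * (p s * κ₁ x₁ s) * (∑ s', p s' * κ₂ x₂ s')
                / (∑ s', p s' * κ₁ x₁ s')))))
      = (∑ s, ∑ x₁, ∑ x₂,
        (if κ₁ x₁ s = 0 then 0 else
          lam x₁ x₂ * (p s * κ₂ x₂ s) * Real.log (κ₁ x₁ s / ∑ s', p s' * κ₁ x₁ s')))
        + ((∑ s, ∑ x₁, ∑ x₂, lam x₁ x₂ * (p s * κ₂ x₂ s))
          - (∑ s, ∑ x₁, ∑ x₂,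
            (if (∑ s', p s' * κ₁ x₁ s') = 0 then 0 else
              lam x₁ x₂ * (p s * κ₁ x₁ s) * (∑ s', p s' * κ₂ x₂ s')
                / (∑ s', p s' * κ₁ x₁ s')))) := by
    simp only [Finset.sum_add_distrib, Finset.sum_sub_distrib]
  rw [hsplit, hA, hB, hC, hD] at main
  linarith

/-- a Blackwell-inferior channel is less capable: if `κ₁ ⪯ κ₂` then
`I(p, κ₁) ≤ I(p, κ₂)` for every input distribution `p`. -/
theorem garbling_le_mutualInfo {S X₁ X₂ : Type} [Fintype S] [Fintype X₁] [Fintype X₂]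
    (κ₁ : X₁ → S → ℝ) (κ₂ : X₂ → S → ℝ)
    (hκ₁ : IsChannel κ₁) (hκ₂ : IsChannel κ₂)
    (hgarb : IsGarbling κ₁ κ₂) :
    ∀ p : S → ℝ, IsDist p → mutualInfo p κ₁ ≤ mutualInfo p κ₂ := by
  obtain ⟨lam, ⟨hl0, hl1⟩, hlk⟩ := hgarb
  obtain ⟨h10, h11⟩ := hκ₁
  obtain ⟨h20, h21⟩ := hκ₂
  intro p hp
  obtain ⟨hp0, hp1⟩ := hp
  exact dpi_aux κ₁ κ₂ lam p h10 h11 h20 h21 hl0 hl1 hlk hp0 hp1
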